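/- arXiv:2304.12286 — 4 statements merged into one kernel-verified Lean document; each statement's English description precedes it below -/
import Mathlib

section
/- Let f : ℝ → ℝ be defined by f(μ) = 12(3μ+2)(1+μ)/(15μ² + 34μ + 8). For every real μ with 2/3 ≤ μ ≤ 2/√3 one has f(μ) ≥ (6/71)(11 + 8√3), with equality if and only if μ = 2/√3. -/
/-! Multiplying out, `71 · (f μ - m)` with `m = (6/71)(11 + 8√3)` is
`2 (2√3 - 3μ) (98√3 - 96 - (261 - 120√3) μ) / (15μ² + 34μ + 8)`.
On `2/3 ≤ μ ≤ 2/√3 = 2√3/3` the first factor is nonnegative and vanishes only at the right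
endpoint, while the second, being decreasing in `μ`, is at least its value `144 - 76√3 > 0`
there. -/

open Real

namespace DelPezzoDegreeTwo

lemma two_div_sqrt_three : 2 / √3 = 2 * √3 / 3 := by
  rw [div_eq_div_iff (by positivity) (by norm_num)]
  nlinarith [sq_sqrt (show (0 : ℝ) ≤ 3 by norm_num)]

lemma ratio_sub_min_eq {μ : ℝ} (hD : 15 * μ ^ 2 + 34 * μ + 8 ≠ 0) :
    12 * (3 * μ + 2) * (1 + μ) / (15 * μ ^ 2 + 34 * μ + 8) - 6 / 71 * (11 + 8 * √3) =
      2 * (2 * √3 - 3 * μ) * (98 * √3 - 96 - (261 - 120 * √3) * μ) /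
        (71 * (15 * μ ^ 2 + 34 * μ + 8)) := by
  rw [div_sub' hD, div_eq_div_iff hD (mul_ne_zero (by norm_num) hD)]
  linear_combination (-(480 * μ + 392) * (15 * μ ^ 2 + 34 * μ + 8)) * sq_sqrt (show (0 : ℝ) ≤ 3 by norm_num)

lemma cofactor_pos {μ : ℝ} (hμ : μ ≤ 2 * √3 / 3) :
    0 < 98 * √3 - 96 - (261 - 120 * √3) * μ := by
  have hs : √3 ^ 2 = 3 := sq_sqrt (by norm_num)
  have hs_lo : 1.7 < √3 := by nlinarith [sqrt_nonneg 3]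
  have hs_hi : √3 < 1.9 := by nlinarith [sqrt_nonneg 3]
  have h_end : 0 < 98 * √3 - 96 - (261 - 120 * √3) * (2 * √3 / 3) := by nlinarith
  nlinarith

end DelPezzoDegreeTwo

open DelPezzoDegreeTwo in
/-- For `f μ = 12(3μ+2)(1+μ)/(15μ² + 34μ + 8)` and every real `μ` with
`2/3 ≤ μ ≤ 2/√3` one has `f μ ≥ (6/71)(11 + 8√3)`, with equality iff `μ = 2/√3`. -/
theorem stmt1 (f : ℝ → ℝ)
    (hf : ∀ μ : ℝ, f μ = 12 * (3 * μ + 2) * (1 + μ) / (15 * μ ^ 2 + 34 * μ + 8)) :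
    ∀ μ : ℝ, 2 / 3 ≤ μ → μ ≤ 2 / Real.sqrt 3 →
      f μ ≥ 6 / 71 * (11 + 8 * Real.sqrt 3) ∧
      (f μ = 6 / 71 * (11 + 8 * Real.sqrt 3) ↔ μ = 2 / Real.sqrt 3) := by
  intro μ hμ_lo hμ_hi
  rw [two_div_sqrt_three] at hμ_hi ⊢
  have hD : 0 < 71 * (15 * μ ^ 2 + 34 * μ + 8) := by nlinarith
  have hdiff := ratio_sub_min_eq (μ := μ) (by linarith)
  rw [← hf] at hdiff
  have hc : 0 < 98 * √3 - 96 - (261 - 120 * √3) * μ := cofactor_pos hμ_hi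
  have hgap : 0 ≤ 2 * √3 - 3 * μ := by linarith
  have hnonneg : 0 ≤ f μ - 6 / 71 * (11 + 8 * √3) := hdiff ▸ by positivity
  refine ⟨sub_nonneg.mp hnonneg, ⟨fun h => ?_, fun h => ?_⟩⟩
  · rw [h, sub_self, eq_comm, div_eq_zero_iff] at hdiff
    have : 2 * √3 - 3 * μ = 0 := by
      simpa [hc.ne', hD.ne'] using hdiff
    linarith
  · rw [← sub_eq_zero, hdiff, h]
    ring
end

section
/- Let a, b be real numbers with 0 < (√3/2)·a < b < a, and set t₁ = a(3a+4b)/(3a+2b). Define h : ℝ → ℝ piecewise by: h(t) = t²/(2a²b²) for 0 ≤ t ≤ b; h(t) = ((a+t)/(a(a+b)))·((t−b)/(b(a+b))) + (a+t)²/(2a²(a+b)²) for b < t ≤ t₁; and h(t) = (6(a+2b−2t)/(4b²−3a²))·((3t(2b−a)−4b²)/(b(4b²−3a²))) + 18(a+2b−2t)²/(4b²−3a²)² for t₁ < t ≤ (a+2b)/2. Then ∫₀^{(a+2b)/2} h(t) dt = (45a² + 60ab + 44b²)/(12b(3a+2b)²). -/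
open MeasureTheory Set
open scoped Interval

set_option maxHeartbeats 1000000

private lemma polyint (c2 c1 c0 x y : ℝ) :
    ∫ t in x..y, (c2 * t ^ 2 + c1 * t + c0)
      = c2 * (y ^ 3 - x ^ 3) / 3 + c1 * (y ^ 2 - x ^ 2) / 2 + c0 * (y - x) := by
  have h1 : IntervalIntegrable (fun t : ℝ => c2 * t ^ 2) volume x y :=
    (Continuous.intervalIntegrable (by fun_prop) x y)
  have h2 : IntervalIntegrable (fun t : ℝ => c1 * t) volume x y :=
    (Continuous.intervalIntegrable (by fun_prop) x y)
  have h3 : IntervalIntegrable (fun _ : ℝ => c0) volume x y :=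
    (Continuous.intervalIntegrable (by fun_prop) x y)
  rw [intervalIntegral.integral_add (h1.add h2) h3, intervalIntegral.integral_add h1 h2,
    intervalIntegral.integral_const_mul, intervalIntegral.integral_const_mul,
    integral_pow, integral_id, intervalIntegral.integral_const]
  push_cast
  rw [smul_eq_mul]
  ring

/-- For reals `a, b` with `0 < (√3/2)a < b < a`, `t₁ = a(3a+4b)/(3a+2b)`, and
the piecewise function `h(t) = t²/(2a²b²)` on `[0,b]`,
`h(t) = ((a+t)/(a(a+b)))·((t−b)/(b(a+b))) + (a+t)²/(2a²(a+b)²)` on `(b, t₁]`,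
`h(t) = (6(a+2b−2t)/(4b²−3a²))·((3t(2b−a)−4b²)/(b(4b²−3a²))) + 18(a+2b−2t)²/(4b²−3a²)²`
on `(t₁, (a+2b)/2]`, one has
`∫₀^{(a+2b)/2} h(t) dt = (45a² + 60ab + 44b²)/(12b(3a+2b)²)`. -/
theorem stmt6 (a b : ℝ) (h : ℝ → ℝ)
    (ha : 0 < Real.sqrt 3 / 2 * a) (hab : Real.sqrt 3 / 2 * a < b) (hba : b < a)
    (hh1 : ∀ t : ℝ, 0 ≤ t → t ≤ b → h t = t ^ 2 / (2 * a ^ 2 * b ^ 2))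
    (hh2 : ∀ t : ℝ, b < t → t ≤ a * (3 * a + 4 * b) / (3 * a + 2 * b) →
      h t = (a + t) / (a * (a + b)) * ((t - b) / (b * (a + b)))
        + (a + t) ^ 2 / (2 * a ^ 2 * (a + b) ^ 2))
    (hh3 : ∀ t : ℝ, a * (3 * a + 4 * b) / (3 * a + 2 * b) < t → t ≤ (a + 2 * b) / 2 →
      h t = 6 * (a + 2 * b - 2 * t) / (4 * b ^ 2 - 3 * a ^ 2)
              * ((3 * t * (2 * b - a) - 4 * b ^ 2) / (b * (4 * b ^ 2 - 3 * a ^ 2)))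
        + 18 * (a + 2 * b - 2 * t) ^ 2 / (4 * b ^ 2 - 3 * a ^ 2) ^ 2) :
    ∫ t in (0 : ℝ)..((a + 2 * b) / 2), h t
      = (45 * a ^ 2 + 60 * a * b + 44 * b ^ 2) / (12 * b * (3 * a + 2 * b) ^ 2) := by
  have hs3 : (0:ℝ) < Real.sqrt 3 := Real.sqrt_pos.mpr (by norm_num)
  have ha0 : 0 < a := by nlinarith
  have hb0 : 0 < b := lt_trans ha hab
  have h3a : 3 * a ^ 2 < 4 * b ^ 2 := by
    have h2 : Real.sqrt 3 * a < 2 * b := by linarith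
    have := Real.sq_sqrt (by norm_num : (3:ℝ) ≥ 0)
    nlinarith [Real.sqrt_nonneg 3]
  set t₁ : ℝ := a * (3 * a + 4 * b) / (3 * a + 2 * b) with ht₁
  set T : ℝ := (a + 2 * b) / 2 with hT
  have hden : (0:ℝ) < 3 * a + 2 * b := by linarith
  have hbt1 : b ≤ t₁ := by
    rw [ht₁, le_div_iff₀ hden]; nlinarith
  have ht1T : t₁ ≤ T := by
    rw [ht₁, div_le_iff₀ hden, hT]; nlinarith
  -- polynomial forms
  set g1 : ℝ → ℝ := fun t => (1 / (2 * a ^ 2 * b ^ 2)) * t ^ 2 + 0 * t + 0 with hg1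
  set g2 : ℝ → ℝ := fun t => ((2*a+b)/(2*a^2*b*(a+b)^2)) * t ^ 2 + (1/(b*(a+b)^2)) * t
      + (-1/(2*(a+b)^2)) with hg2
  set g3 : ℝ → ℝ := fun t => (36*a/(b*(4*b^2-3*a^2)^2)) * t ^ 2
      + (-(18*a^2+72*a*b+24*b^2)/(b*(4*b^2-3*a^2)^2)) * t
      + (6*b*(a+2*b)*(3*a+2*b)/(b*(4*b^2-3*a^2)^2)) with hg3
  have hab0 : (0:ℝ) < a + b := by linarith
  have hD3 : (0:ℝ) < 4 * b ^ 2 - 3 * a ^ 2 := by linarith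
  have he1 : ∀ t ∈ Icc (0:ℝ) b, h t = g1 t := by
    intro t ht
    rw [hh1 t ht.1 ht.2, hg1]; ring
  have he2 : ∀ t ∈ Ioc b t₁, h t = g2 t := by
    intro t ht
    rw [hh2 t ht.1 ht.2, hg2]
    field_simp
    ring
  have he3 : ∀ t ∈ Ioc t₁ T, h t = g3 t := by
    intro t ht
    rw [hh3 t ht.1 ht.2, hg3]
    field_simp
    ring
  have hc1 : Continuous g1 := by rw [hg1]; fun_prop
  have hc2 : Continuous g2 := by rw [hg2]; fun_prop
  have hc3 : Continuous g3 := by rw [hg3]; fun_prop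
  have hae1 : h =ᵐ[volume.restrict (Ι (0:ℝ) b)] g1 := by
    rw [uIoc_of_le hb0.le]
    filter_upwards [ae_restrict_mem measurableSet_Ioc] with t ht
    exact he1 t ⟨ht.1.le, ht.2⟩
  have hae2 : h =ᵐ[volume.restrict (Ι b t₁)] g2 := by
    rw [uIoc_of_le hbt1]
    filter_upwards [ae_restrict_mem measurableSet_Ioc] with t ht
    exact he2 t ht
  have hae3 : h =ᵐ[volume.restrict (Ι t₁ T)] g3 := by
    rw [uIoc_of_le ht1T]
    filter_upwards [ae_restrict_mem measurableSet_Ioc] with t ht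
    exact he3 t ht
  have hi1 : IntervalIntegrable h volume 0 b :=
    (hc1.intervalIntegrable 0 b).congr_ae hae1.symm
  have hi2 : IntervalIntegrable h volume b t₁ :=
    (hc2.intervalIntegrable b t₁).congr_ae hae2.symm
  have hi3 : IntervalIntegrable h volume t₁ T :=
    (hc3.intervalIntegrable t₁ T).congr_ae hae3.symm
  have hsplit : ∫ t in (0:ℝ)..T, h t
      = (∫ t in (0:ℝ)..b, h t) + (∫ t in b..t₁, h t) + (∫ t in t₁..T, h t) := by
    rw [intervalIntegral.integral_add_adjacent_intervals hi1 hi2,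
      intervalIntegral.integral_add_adjacent_intervals (hi1.trans hi2) hi3]
  have he1' : ∀ t ∈ Ι (0:ℝ) b, h t = g1 t := by
    rw [uIoc_of_le hb0.le]; exact fun t ht => he1 t ⟨ht.1.le, ht.2⟩
  have he2' : ∀ t ∈ Ι b t₁, h t = g2 t := by
    rw [uIoc_of_le hbt1]; exact he2
  have he3' : ∀ t ∈ Ι t₁ T, h t = g3 t := by
    rw [uIoc_of_le ht1T]; exact he3
  rw [hsplit, intervalIntegral.integral_congr_ae (MeasureTheory.ae_of_all _ he1'),
    intervalIntegral.integral_congr_ae (MeasureTheory.ae_of_all _ he2'),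
    intervalIntegral.integral_congr_ae (MeasureTheory.ae_of_all _ he3')]
  rw [hg1, hg2, hg3, polyint, polyint, polyint, ht₁, hT]
  have h1 : a ≠ 0 := ne_of_gt ha0
  have h2 : b ≠ 0 := ne_of_gt hb0
  have h3 : a + b ≠ 0 := ne_of_gt hab0
  have h4 : 4 * b ^ 2 - 3 * a ^ 2 ≠ 0 := ne_of_gt hD3
  have h5 : 3 * a + 2 * b ≠ 0 := ne_of_gt hden
  generalize hD : 4 * b ^ 2 - 3 * a ^ 2 = D at h4 ⊢
  have hD' : D = 4 * b ^ 2 - 3 * a ^ 2 := hD.symm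
  field_simp
  subst hD'
  ring
end

section
/- Let a, b be positive real numbers. Equip ℝ³ (with standard basis e₁, e₂, e₃) with the symmetric bilinear form ⟨·,·⟩ determined by ⟨e₁,e₁⟩ = −(a+b)/b, ⟨e₂,e₂⟩ = 3 − 4b/a, ⟨e₃,e₃⟩ = −1/(ab), ⟨e₁,e₂⟩ = 1, ⟨e₁,e₃⟩ = 1/b, ⟨e₂,e₃⟩ = 2/a. Set K = (1/2)e₁ + (1/2)e₂ + ((a+2b)/2)e₃ and, for t ∈ ℝ, P(t) = ((a+3b−2t)/(2(a+b)))e₁ + (1/2)e₂ + ((a+2b−2t)/2)e₃ and N(t) = ((t−b)/(a+b))e₁. Then K − t·e₃ = P(t) + N(t), ⟨P(t), e₁⟩ = 0, and ⟨P(t), e₃⟩ = (a+t)/(a(a+b)). -/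
/-!
`N(t)` is the `B`-orthogonal projection of `D = K - t e₃` onto the line spanned by `e₁`:
since `⟨D, e₁⟩ = (b - t)/b` and `⟨e₁, e₁⟩ = -(a + b)/b`, its coefficient
`⟨D, e₁⟩ / ⟨e₁, e₁⟩` is `(t - b)/(a + b)`. Hence `P(t) = D - N(t)` is orthogonal to `e₁`
for formal reasons, and `⟨P(t), e₃⟩ = ⟨D, e₃⟩ - (t - b)/(b(a + b))` with `⟨D, e₃⟩ = t/(ab)`.
-/

namespace LinearMap

variable {R M : Type*} [Field R] [AddCommGroup M] [Module R M] (B : M →ₗ[R] M →ₗ[R] R)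

theorem apply_sub_div_smul_apply_self_eq_zero {l : M} (hl : B l l ≠ 0) (v : M) :
    B (v - (B v l / B l l) • l) l = 0 := by
  simp only [map_sub, map_smul, sub_apply, smul_apply, smul_eq_mul, div_mul_cancel₀ _ hl,
    sub_self]

theorem apply_smul_add_smul_add_smul (x₁ x₂ x₃ : R) (e₁ e₂ e₃ w : M) :
    B (x₁ • e₁ + x₂ • e₂ + x₃ • e₃) w = x₁ * B e₁ w + x₂ * B e₂ w + x₃ * B e₃ w := by
  simp only [map_add, map_smul, add_apply, smul_apply, smul_eq_mul]

end LinearMap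

theorem stmt11_general (a b : ℝ) (ha : 0 < a) (hb : 0 < b)
    (B : (Fin 3 → ℝ) →ₗ[ℝ] (Fin 3 → ℝ) →ₗ[ℝ] ℝ)
    (e₁ e₂ e₃ K : Fin 3 → ℝ) (P N : ℝ → Fin 3 → ℝ)
    (hsymm : ∀ x y, B x y = B y x)
    (h11 : B e₁ e₁ = -((a + b) / b))
    (h33 : B e₃ e₃ = -(1 / (a * b)))
    (h12 : B e₁ e₂ = 1) (h13 : B e₁ e₃ = 1 / b) (h23 : B e₂ e₃ = 2 / a)
    (hK : K = (1 / 2 : ℝ) • e₁ + (1 / 2 : ℝ) • e₂ + ((a + 2 * b) / 2) • e₃)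
    (hP : ∀ t : ℝ, P t = ((a + 3 * b - 2 * t) / (2 * (a + b))) • e₁
      + (1 / 2 : ℝ) • e₂ + ((a + 2 * b - 2 * t) / 2) • e₃)
    (hN : ∀ t : ℝ, N t = ((t - b) / (a + b)) • e₁) :
    ∀ t : ℝ, K - t • e₃ = P t + N t ∧ B (P t) e₁ = 0 ∧
      B (P t) e₃ = (a + t) / (a * (a + b)) := by
  intro t
  have hab : a + b ≠ 0 := by positivity
  have hD : K - t • e₃ = (1 / 2 : ℝ) • e₁ + (1 / 2 : ℝ) • e₂ + ((a + 2 * b) / 2 - t) • e₃ := by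
    rw [hK]; module
  have hDe₁ : B (K - t • e₃) e₁ = (b - t) / b := by
    rw [hD, LinearMap.apply_smul_add_smul_add_smul, h11, hsymm e₂, h12, hsymm e₃, h13]
    field_simp; ring
  have hDe₃ : B (K - t • e₃) e₃ = t / (a * b) := by
    rw [hD, LinearMap.apply_smul_add_smul_add_smul, h13, h23, h33]
    field_simp; ring
  have hN_proj : N t = (B (K - t • e₃) e₁ / B e₁ e₁) • e₁ := by
    rw [hN, hDe₁, h11]; congr 1; field_simp; ring
  have hPD : P t = K - t • e₃ - N t := by
    rw [hP, hN, hK]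
    match_scalars
    · field_simp; ring
    all_goals ring
  refine ⟨sub_eq_iff_eq_add.mp hPD.symm, ?_, ?_⟩
  · rw [hPD, hN_proj]
    exact B.apply_sub_div_smul_apply_self_eq_zero (by rw [h11]; exact neg_ne_zero.mpr (by positivity)) _
  · rw [hPD, hN, map_sub, map_smul, LinearMap.sub_apply, LinearMap.smul_apply, smul_eq_mul,
      hDe₃, h13]
    field_simp; ring

/-- With the symmetric bilinear form on `ℝ³` determined by
`⟨e₁,e₁⟩ = −(a+b)/b`, `⟨e₂,e₂⟩ = 3 − 4b/a`, `⟨e₃,e₃⟩ = −1/(ab)`, `⟨e₁,e₂⟩ = 1`,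
`⟨e₁,e₃⟩ = 1/b`, `⟨e₂,e₃⟩ = 2/a`, `K = (1/2)e₁ + (1/2)e₂ + ((a+2b)/2)e₃`,
`P(t) = ((a+3b−2t)/(2(a+b)))e₁ + (1/2)e₂ + ((a+2b−2t)/2)e₃` and
`N(t) = ((t−b)/(a+b))e₁`, one has `K − t·e₃ = P(t) + N(t)`, `⟨P(t),e₁⟩ = 0`, and
`⟨P(t),e₃⟩ = (a+t)/(a(a+b))` for every real `t`. -/
theorem stmt11 (a b : ℝ) (ha : 0 < a) (hb : 0 < b)
    (B : (Fin 3 → ℝ) →ₗ[ℝ] (Fin 3 → ℝ) →ₗ[ℝ] ℝ)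
    (e₁ e₂ e₃ K : Fin 3 → ℝ) (P N : ℝ → Fin 3 → ℝ)
    (he₁ : e₁ = ![1, 0, 0]) (he₂ : e₂ = ![0, 1, 0]) (he₃ : e₃ = ![0, 0, 1])
    (hsymm : ∀ x y, B x y = B y x)
    (h11 : B e₁ e₁ = -((a + b) / b)) (h22 : B e₂ e₂ = 3 - 4 * b / a)
    (h33 : B e₃ e₃ = -(1 / (a * b)))
    (h12 : B e₁ e₂ = 1) (h13 : B e₁ e₃ = 1 / b) (h23 : B e₂ e₃ = 2 / a)
    (hK : K = (1 / 2 : ℝ) • e₁ + (1 / 2 : ℝ) • e₂ + ((a + 2 * b) / 2) • e₃)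
    (hP : ∀ t : ℝ, P t = ((a + 3 * b - 2 * t) / (2 * (a + b))) • e₁
      + (1 / 2 : ℝ) • e₂ + ((a + 2 * b - 2 * t) / 2) • e₃)
    (hN : ∀ t : ℝ, N t = ((t - b) / (a + b)) • e₁) :
    ∀ t : ℝ, K - t • e₃ = P t + N t ∧ B (P t) e₁ = 0 ∧
      B (P t) e₃ = (a + t) / (a * (a + b)) :=
  stmt11_general a b ha hb B e₁ e₂ e₃ K P N hsymm h11 h33 h12 h13 h23 hK hP hN
end

section
/- Let a, b be positive real numbers with 4b² > 3a². Equip ℝ³ (with standard basis e₁, e₂, e₃) with the symmetric bilinear form ⟨·,·⟩ determined by ⟨e₁,e₁⟩ = −(a+b)/b, ⟨e₂,e₂⟩ = 3 − 4b/a, ⟨e₃,e₃⟩ = −1/(ab), ⟨e₁,e₂⟩ = 1, ⟨e₁,e₃⟩ = 1/b, ⟨e₂,e₃⟩ = 2/a. Set K = (1/2)e₁ + (1/2)e₂ + ((a+2b)/2)e₃ and, for t ∈ ℝ, P(t) = (3(2b−a)(a+2b−2t)/(2(4b²−3a²)))e₁ + ((3a+2b)(a+2b−2t)/(2(4b²−3a²)))e₂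 + ((a+2b−2t)/2)e₃ and N(t) = ((3t(2b−a)−4b²)/(4b²−3a²))e₁ + ((t(3a+2b)−a(3a+4b))/(4b²−3a²))e₂. Then K − t·e₃ = P(t) + N(t), ⟨P(t), e₁⟩ = 0, ⟨P(t), e₂⟩ = 0, ⟨P(t), e₃⟩ = 6(a+2b−2t)/(4b²−3a²), and ⟨P(t), P(t)⟩ = 3(a+2b−2t)²/(4b²−3a²); in particular ⟨P(t), P(t)⟩ > 0 for t < (a+2b)/2 and ⟨P(t), P(t)⟩ = 0 at t = (a+2b)/2. -/
/-- With the symmetric bilinear form on `ℝ³` determined by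
`⟨e₁,e₁⟩ = −(a+b)/b`, `⟨e₂,e₂⟩ = 3 − 4b/a`, `⟨e₃,e₃⟩ = −1/(ab)`, `⟨e₁,e₂⟩ = 1`,
`⟨e₁,e₃⟩ = 1/b`, `⟨e₂,e₃⟩ = 2/a`, with `4b² > 3a²`,
`K = (1/2)e₁ + (1/2)e₂ + ((a+2b)/2)e₃`,
`P(t) = (3(2b−a)(a+2b−2t)/(2(4b²−3a²)))e₁ + ((3a+2b)(a+2b−2t)/(2(4b²−3a²)))e₂ +
((a+2b−2t)/2)e₃` and
`N(t) = ((3t(2b−a)−4b²)/(4b²−3a²))e₁ + ((t(3a+2b)−a(3a+4b))/(4b²−3a²))e₂`, one has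
`K − t·e₃ = P(t) + N(t)`, `⟨P(t),e₁⟩ = 0`, `⟨P(t),e₂⟩ = 0`,
`⟨P(t),e₃⟩ = 6(a+2b−2t)/(4b²−3a²)` and `⟨P(t),P(t)⟩ = 3(a+2b−2t)²/(4b²−3a²)`;
in particular `⟨P(t),P(t)⟩ > 0` for `t < (a+2b)/2` and `⟨P(t),P(t)⟩ = 0` at
`t = (a+2b)/2`. -/
theorem stmt12 (a b : ℝ) (ha : 0 < a) (hb : 0 < b)
    (h4b3a : 4 * b ^ 2 > 3 * a ^ 2)
    (B : (Fin 3 → ℝ) →ₗ[ℝ] (Fin 3 → ℝ) →ₗ[ℝ] ℝ)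
    (e₁ e₂ e₃ K : Fin 3 → ℝ) (P N : ℝ → Fin 3 → ℝ)
    (he₁ : e₁ = ![1, 0, 0]) (he₂ : e₂ = ![0, 1, 0]) (he₃ : e₃ = ![0, 0, 1])
    (hsymm : ∀ x y, B x y = B y x)
    (h11 : B e₁ e₁ = -((a + b) / b)) (h22 : B e₂ e₂ = 3 - 4 * b / a)
    (h33 : B e₃ e₃ = -(1 / (a * b)))
    (h12 : B e₁ e₂ = 1) (h13 : B e₁ e₃ = 1 / b) (h23 : B e₂ e₃ = 2 / a)
    (hK : K = (1 / 2 : ℝ) • e₁ + (1 / 2 : ℝ) • e₂ + ((a + 2 * b) / 2) • e₃)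
    (hP : ∀ t : ℝ, P t
      = (3 * (2 * b - a) * (a + 2 * b - 2 * t) / (2 * (4 * b ^ 2 - 3 * a ^ 2))) • e₁
      + ((3 * a + 2 * b) * (a + 2 * b - 2 * t) / (2 * (4 * b ^ 2 - 3 * a ^ 2))) • e₂
      + ((a + 2 * b - 2 * t) / 2) • e₃)
    (hN : ∀ t : ℝ, N t
      = ((3 * t * (2 * b - a) - 4 * b ^ 2) / (4 * b ^ 2 - 3 * a ^ 2)) • e₁
      + ((t * (3 * a + 2 * b) - a * (3 * a + 4 * b)) / (4 * b ^ 2 - 3 * a ^ 2)) • e₂) :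
    (∀ t : ℝ, K - t • e₃ = P t + N t ∧ B (P t) e₁ = 0 ∧ B (P t) e₂ = 0 ∧
      B (P t) e₃ = 6 * (a + 2 * b - 2 * t) / (4 * b ^ 2 - 3 * a ^ 2) ∧
      B (P t) (P t) = 3 * (a + 2 * b - 2 * t) ^ 2 / (4 * b ^ 2 - 3 * a ^ 2)) ∧
    (∀ t : ℝ, t < (a + 2 * b) / 2 → 0 < B (P t) (P t)) ∧
    B (P ((a + 2 * b) / 2)) (P ((a + 2 * b) / 2)) = 0 := by
  have hD : (0:ℝ) < 4 * b ^ 2 - 3 * a ^ 2 := by linarith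
  have hDne : (4 * b ^ 2 - 3 * a ^ 2 : ℝ) ≠ 0 := ne_of_gt hD
  have hDne' : (b ^ 2 * 4 - 3 * a ^ 2 : ℝ) ≠ 0 := by rw [mul_comm]; exact hDne
  have h21 : B e₂ e₁ = 1 := (hsymm e₂ e₁).trans h12
  have h31 : B e₃ e₁ = 1 / b := (hsymm e₃ e₁).trans h13
  have h32 : B e₃ e₂ = 2 / a := (hsymm e₃ e₂).trans h23
  have hBP : ∀ t : ℝ, B (P t) (P t) = 3 * (a + 2 * b - 2 * t) ^ 2 / (4 * b ^ 2 - 3 * a ^ 2) := by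
    intro t
    rw [hP]
    simp only [map_add, map_smul, LinearMap.add_apply, LinearMap.smul_apply, smul_eq_mul,
      h11, h22, h33, h12, h13, h23, h21, h31, h32]
    field_simp
    ring
  refine ⟨fun t => ⟨?_, ?_, ?_, ?_, hBP t⟩, fun t ht => ?_, ?_⟩
  · rw [hK, hP, hN, he₁, he₂, he₃]
    ext i
    fin_cases i <;>
      simp <;> field_simp <;> ring
  · rw [hP]
    simp only [map_add, map_smul, LinearMap.add_apply, LinearMap.smul_apply, smul_eq_mul,
      h11, h21, h31]
    field_simp
    ring
  · rw [hP]
    simp only [map_add, map_smul, LinearMap.add_apply, LinearMap.smul_apply, smul_eq_mul,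
      h22, h12, h32]
    field_simp
    ring
  · rw [hP]
    simp only [map_add, map_smul, LinearMap.add_apply, LinearMap.smul_apply, smul_eq_mul,
      h33, h13, h23]
    field_simp
    ring
  · rw [hBP]
    have h1 : 0 < a + 2 * b - 2 * t := by linarith
    exact div_pos (mul_pos (by norm_num) (pow_pos h1 2)) hD
  · rw [hBP, show a + 2 * b - 2 * ((a + 2 * b) / 2) = 0 from by ring]
    simp
end
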